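/- Fix an integer d ≥ 2, θ > 0, and P_{12},…,P_{1d} > 0 (the first row of a d×d row-stochastic mutation matrix P). Define γ_0 : ℤ^d → ℝ by γ_0(n) = ∏_{i=2}^d Γ(θP_{1i} + n_i)/Γ(θP_{1i}) for n ∈ ℕ^d and γ_0(n) = 0 whenever n has a negative component. Then: (i) γ_0(e_1) = 1; (ii) γ_0(e_i) = θP_{1i} for i = 2,…,d; (iii) γ_0(n_1 e_1) = 1 for every n_1 ∈ ℕ; and (iv) for every n ∈ ℕ^d, (‖n‖ − n_1) γ_0(n) = ∑_{i=2}^d n_i (n_i − 1 + θP_{1i}) γ_0(n − e_i). That is, γ_0 satisfies the order-zero boundary conditions and recursions characterising the leading coefficient of the asymptotic expansion of the sampling probability. -/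

import Mathlib

open Finset

noncomputable section

/-- The `i`-th standard unit vector of `ℤ^d`. -/
def stdE {d : ℕ} (i : Fin d) : Fin d → ℤ := fun j => if j = i then 1 else 0

/-- The total size `‖n‖ = n_1 + ⋯ + n_d` of a configuration. -/
def tot {d : ℕ} (n : Fin d → ℤ) : ℤ := ∑ i, n i

/-- `n ∈ ℕ^d`, i.e. all components of `n : ℤ^d` are nonnegative. -/
def IsNatVec {d : ℕ} (n : Fin d → ℤ) : Prop := ∀ i, 0 ≤ n i

/-! With `a_i = θP_{1i} > 0`, `γ₀(n)` is the product of the rising factorials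
`a_i (a_i + 1) ⋯ (a_i + n_i - 1)`, `i ≥ 2`. Lowering `n_i` by one removes the last factor, so
`n_i (n_i - 1 + a_i) γ₀(n - e_i) = n_i γ₀(n)` (trivially when `n_i = 0`), and summing over `i ≥ 2`
gives `(‖n‖ - n_1) γ₀(n)`. The boundary values are empty or one-factor products. -/

section

variable {d : ℕ}

theorem stdE_apply_self (i : Fin d) : stdE i i = 1 := if_pos rfl

theorem stdE_apply_of_ne {i j : Fin d} (h : j ≠ i) : stdE i j = 0 := if_neg h

theorem isNatVec_smul_stdE (k : ℕ) (i : Fin d) : IsNatVec ((k : ℤ) • stdE i) := fun j => by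
  by_cases h : j = i <;> simp [stdE, h]

theorem isNatVec_stdE (i : Fin d) : IsNatVec (stdE i) := by
  simpa using isNatVec_smul_stdE 1 i

theorem IsNatVec.sub_stdE {n : Fin d → ℤ} (hn : IsNatVec n) {i : Fin d} (hi : 0 < n i) :
    IsNatVec (n - stdE i) := fun j => by
  by_cases h : j = i
  · subst h; simp [stdE_apply_self]; omega
  · simpa [stdE_apply_of_ne h] using hn j

theorem tot_sub_apply_eq_sum_erase (n : Fin d → ℤ) (k : Fin d) :
    (tot n : ℝ) - n k = ∑ i ∈ univ.erase k, (n i : ℝ) := by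
  rw [tot, Int.cast_sum, ← add_sum_erase _ _ (mem_univ k), add_sub_cancel_left]

def gammaRatioProd (s : Finset (Fin d)) (a : Fin d → ℝ) (n : Fin d → ℤ) : ℝ :=
  ∏ i ∈ s, Real.Gamma (a i + n i) / Real.Gamma (a i)

variable {s : Finset (Fin d)} {a : Fin d → ℝ}

theorem gammaRatioProd_eq_one (ha : ∀ i ∈ s, 0 < a i) {n : Fin d → ℤ}
    (hn : ∀ i ∈ s, n i = 0) : gammaRatioProd s a n = 1 :=
  prod_eq_one fun i hi => by
    rw [hn i hi, Int.cast_zero, add_zero, div_self (Real.Gamma_pos_of_pos (ha i hi)).ne']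

theorem gammaRatioProd_smul_stdE_of_notMem (ha : ∀ i ∈ s, 0 < a i) {i : Fin d} (hi : i ∉ s)
    (k : ℤ) : gammaRatioProd s a (k • stdE i) = 1 :=
  gammaRatioProd_eq_one ha fun j hj => by
    simp [stdE_apply_of_ne (ne_of_mem_of_not_mem hj hi)]

theorem gammaRatioProd_sub_stdE {n : Fin d → ℤ} {i : Fin d} (hi : i ∈ s) (ha : 0 < a i)
    (hn : 0 < n i) :
    (n i - 1 + a i) * gammaRatioProd s a (n - stdE i) = gammaRatioProd s a n := by
  have hrest : ∏ j ∈ s.erase i, Real.Gamma (a j + ((n - stdE i) j : ℤ)) / Real.Gamma (a j)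
      = ∏ j ∈ s.erase i, Real.Gamma (a j + n j) / Real.Gamma (a j) :=
    prod_congr rfl fun j hj => by simp [stdE_apply_of_ne (ne_of_mem_erase hj)]
  have hpos : 0 < a i + (n i - 1) := by
    have : (1 : ℝ) ≤ n i := by exact_mod_cast hn
    linarith
  have hΓ : Real.Gamma (a i + n i) = (a i + (n i - 1)) * Real.Gamma (a i + (n i - 1)) := by
    rw [← Real.Gamma_add_one hpos.ne']
    ring_nf
  rw [gammaRatioProd, gammaRatioProd, ← mul_prod_erase _ _ hi, ← mul_prod_erase _ _ hi, hrest,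
    Pi.sub_apply, stdE_apply_self, Int.cast_sub, Int.cast_one, hΓ]
  ring

theorem gammaRatioProd_stdE (ha : ∀ i ∈ s, 0 < a i) {i : Fin d} (hi : i ∈ s) :
    gammaRatioProd s a (stdE i) = a i := by
  have hone : (0 : ℤ) < stdE i i := by rw [stdE_apply_self]; exact one_pos
  rw [← gammaRatioProd_sub_stdE hi (ha i hi) hone, sub_self,
    gammaRatioProd_eq_one (n := 0) ha fun _ _ => rfl, stdE_apply_self]
  simp

end

theorem gamma0_satisfies_order_zero_recursions_general {d : ℕ} (θ : ℝ) (hθ : 0 < θ)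
    (P1 : Fin (d + 2) → ℝ) (hP1 : ∀ i : Fin (d + 2), i ≠ 0 → 0 < P1 i)
    (γ₀ : (Fin (d + 2) → ℤ) → ℝ)
    (hγnat : ∀ n : Fin (d + 2) → ℤ, IsNatVec n →
      γ₀ n = ∏ i ∈ univ.erase 0,
        Real.Gamma (θ * P1 i + (n i : ℝ)) / Real.Gamma (θ * P1 i)) :
    γ₀ (stdE 0) = 1 ∧
    (∀ i : Fin (d + 2), i ≠ 0 → γ₀ (stdE i) = θ * P1 i) ∧
    (∀ n₁ : ℕ, γ₀ ((n₁ : ℤ) • stdE 0) = 1) ∧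
    (∀ n : Fin (d + 2) → ℤ, IsNatVec n →
      ((tot n : ℝ) - (n 0 : ℝ)) * γ₀ n
        = ∑ i ∈ univ.erase 0,
            (n i : ℝ) * ((n i : ℝ) - 1 + θ * P1 i) * γ₀ (n - stdE i)) := by
  set a : Fin (d + 2) → ℝ := fun i => θ * P1 i
  have ha : ∀ i ∈ univ.erase 0, 0 < a i := fun i hi => mul_pos hθ (hP1 i (ne_of_mem_erase hi))
  have hγ : ∀ n, IsNatVec n → γ₀ n = gammaRatioProd (univ.erase 0) a n := hγnat
  have hpure : ∀ n₁ : ℕ, γ₀ ((n₁ : ℤ) • stdE 0) = 1 := fun n₁ => by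
    rw [hγ _ (isNatVec_smul_stdE n₁ 0),
      gammaRatioProd_smul_stdE_of_notMem ha (notMem_erase 0 univ)]
  refine ⟨by simpa using hpure 1, fun i hi => ?_, hpure, fun n hn => ?_⟩
  · rw [hγ _ (isNatVec_stdE i), gammaRatioProd_stdE ha (mem_erase.2 ⟨hi, mem_univ i⟩)]
  · rw [tot_sub_apply_eq_sum_erase, sum_mul]
    refine sum_congr rfl fun i hi => ?_
    rcases (hn i).eq_or_lt with h0 | hpos
    · simp [← h0]
    · rw [hγ _ hn, hγ _ (hn.sub_stdE hpos), mul_assoc, gammaRatioProd_sub_stdE hi (ha i hi) hpos]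

/-- **The Gamma-approximation leading coefficient satisfies the order-zero relations**:
with `γ₀(n) = ∏_{i=2}^d Γ(θP_{1i}+n_i)/Γ(θP_{1i})` on `ℕ^d` and `γ₀(n) = 0` when `n`
has a negative component, one has (i) `γ₀(e_1) = 1`; (ii) `γ₀(e_i) = θP_{1i}` for
`i = 2,…,d`; (iii) `γ₀(n_1 e_1) = 1` for all `n_1 ∈ ℕ`; and (iv) for every `n ∈ ℕ^d`,
`(‖n‖-n_1) γ₀(n) = ∑_{i=2}^d n_i(n_i-1+θP_{1i}) γ₀(n-e_i)`.
(Allele `1` is represented by the index `0 : Fin (d+2)`.) -/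
theorem gamma0_satisfies_order_zero_recursions {d : ℕ} (θ : ℝ) (hθ : 0 < θ)
    (P1 : Fin (d + 2) → ℝ) (hP1 : ∀ i : Fin (d + 2), i ≠ 0 → 0 < P1 i)
    (γ₀ : (Fin (d + 2) → ℤ) → ℝ)
    (hγnat : ∀ n : Fin (d + 2) → ℤ, IsNatVec n →
      γ₀ n = ∏ i ∈ univ.erase 0,
        Real.Gamma (θ * P1 i + (n i : ℝ)) / Real.Gamma (θ * P1 i))
    (hγneg : ∀ n : Fin (d + 2) → ℤ, (∃ i, n i < 0) → γ₀ n = 0) :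
    γ₀ (stdE 0) = 1 ∧
    (∀ i : Fin (d + 2), i ≠ 0 → γ₀ (stdE i) = θ * P1 i) ∧
    (∀ n₁ : ℕ, γ₀ ((n₁ : ℤ) • stdE 0) = 1) ∧
    (∀ n : Fin (d + 2) → ℤ, IsNatVec n →
      ((tot n : ℝ) - (n 0 : ℝ)) * γ₀ n
        = ∑ i ∈ univ.erase 0,
            (n i : ℝ) * ((n i : ℝ) - 1 + θ * P1 i) * γ₀ (n - stdE i)) :=
  gamma0_satisfies_order_zero_recursions_general θ hθ P1 hP1 γ₀ hγnat
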